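/- Let F : ℝ^d → ℝ be differentiable with G-Lipschitz gradient, and let δ > 0. Then the gradients of F and of its δ-ball smoothing F^δ satisfy ‖∇F(x) − ∇F^δ(x)‖ ≤ Gδ for every x ∈ ℝ^d. -/

import Mathlib

open MeasureTheory Metric

/-- The uniform probability distribution on the closed unit ball of `ℝ^d`. -/
noncomputable def uniformBall (d : ℕ) : Measure (EuclideanSpace ℝ (Fin d)) :=
  (volume (closedBall (0 : EuclideanSpace ℝ (Fin d)) 1))⁻¹ •
    volume.restrict (closedBall (0 : EuclideanSpace ℝ (Fin d)) 1)

/-- The `δ`-ball smoothing `F^δ(x) = E_{w∼𝔹}[F(x + δw)]`. -/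
noncomputable def ballSmooth {d : ℕ} (F : EuclideanSpace ℝ (Fin d) → ℝ) (δ : ℝ)
    (x : EuclideanSpace ℝ (Fin d)) : ℝ :=
  ∫ w, F (x + δ • w) ∂(uniformBall d)

/-!
Differentiating under the integral sign, `∇F^δ(x) = E_{w∼𝔹}[∇F(x + δw)]`, so
`∇F(x) − ∇F^δ(x)` is the average of `∇F(x) − ∇F(x + δw)` over `‖w‖ ≤ 1`, and each of these
vectors has norm at most `G‖δw‖ ≤ Gδ`.
-/

open InnerProductSpace

theorem norm_sub_integral_le_of_ae_norm_sub_le {Ω E : Type*} [MeasurableSpace Ω]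
    [NormedAddCommGroup E] [NormedSpace ℝ E] [CompleteSpace E] {μ : Measure Ω}
    [IsProbabilityMeasure μ]
    {f : Ω → E} (hf : Integrable f μ) (a : E) {C : ℝ} (h : ∀ᵐ w ∂μ, ‖a - f w‖ ≤ C) :
    ‖a - ∫ w, f w ∂μ‖ ≤ C := by
  have hmean : a - ∫ w, f w ∂μ = ∫ w, (a - f w) ∂μ := by
    rw [integral_sub (integrable_const a) hf, integral_const, probReal_univ, one_smul]
  simpa [hmean] using norm_integral_le_of_norm_le_const h

section uniformBall

variable {d : ℕ}

instance : IsProbabilityMeasure (uniformBall d) where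
  measure_univ := by
    rw [uniformBall, Measure.smul_apply, Measure.restrict_apply_univ, smul_eq_mul]
    exact ENNReal.inv_mul_cancel (measure_closedBall_pos _ _ one_pos).ne'
      (isCompact_closedBall _ _).measure_lt_top.ne

theorem ae_norm_le_one_uniformBall : ∀ᵐ w ∂(uniformBall d), ‖w‖ ≤ 1 := by
  refine Measure.ae_smul_measure ?_ _
  filter_upwards [ae_restrict_mem measurableSet_closedBall] with w hw
  simpa using hw

theorem Continuous.integrable_uniformBall {X : Type*} [NormedAddCommGroup X]
    {f : EuclideanSpace ℝ (Fin d) → X} (hf : Continuous f) : Integrable f (uniformBall d) :=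
  (hf.continuousOn.integrableOn_compact (isCompact_closedBall _ _)).smul_measure
    (ENNReal.inv_ne_top.mpr (measure_closedBall_pos _ _ one_pos).ne')

end uniformBall

section ballSmooth

variable {d : ℕ} {F : EuclideanSpace ℝ (Fin d) → ℝ}

theorem hasFDerivAt_ballSmooth
    {F' : EuclideanSpace ℝ (Fin d) → EuclideanSpace ℝ (Fin d) →L[ℝ] ℝ} (hF : ∀ y, HasFDerivAt F (F' y) y) (hF' : Continuous F') (δ : ℝ)
    (x : EuclideanSpace ℝ (Fin d)) :
    HasFDerivAt (ballSmooth F δ) (∫ w, F' (x + δ • w) ∂(uniformBall d)) x := by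
  have hFc : Continuous F := continuous_iff_continuousAt.mpr fun y => (hF y).continuousAt
  obtain ⟨C, hC⟩ :=
    (isCompact_closedBall x (1 + |δ|)).exists_bound_of_continuousOn hF'.continuousOn
  refine hasFDerivAt_integral_of_dominated_of_fderiv_le (F := fun y w => F (y + δ • w))
    (F' := fun y w => F' (y + δ • w)) (bound := fun _ => C)
    (ball_mem_nhds x one_pos) (.of_forall fun y => ?_) ?_ ?_ ?_ (integrable_const C) ?_
  · exact (Continuous.integrable_uniformBall (by fun_prop)).aestronglyMeasurable
  · exact Continuous.integrable_uniformBall (by fun_prop)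
  · exact (Continuous.integrable_uniformBall (by fun_prop)).aestronglyMeasurable
  · filter_upwards [ae_norm_le_one_uniformBall] with w hw y hy
    refine hC _ (mem_closedBall_iff_norm.mpr ?_)
    calc ‖y + δ • w - x‖ = ‖(y - x) + δ • w‖ := by rw [sub_add_eq_add_sub]
      _ ≤ ‖y - x‖ + |δ| * ‖w‖ := by rw [← Real.norm_eq_abs, ← norm_smul]; exact norm_add_le _ _
      _ ≤ 1 + |δ| := by
        gcongr
        · exact (mem_ball_iff_norm.mp hy).le
        · exact mul_le_of_le_one_right (abs_nonneg δ) hw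
  · filter_upwards with w y _
    exact (hF _).comp y ((hasFDerivAt_id y).add_const _)

theorem hasGradientAt_ballSmooth (hF : Differentiable ℝ F) (hgrad : Continuous (gradient F))
    (δ : ℝ) (x : EuclideanSpace ℝ (Fin d)) :
    HasGradientAt (ballSmooth F δ) (∫ w, gradient F (x + δ • w) ∂(uniformBall d)) x := by
  rw [hasGradientAt_iff_hasFDerivAt]
  refine (hasFDerivAt_ballSmooth (fun y => (hF y).hasGradientAt.hasFDerivAt)
    ((toDual ℝ _).continuous.comp hgrad) δ x).congr_fderiv ?_
  exact (toDual ℝ _).toLinearIsometry.integral_comp_comm _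

end ballSmooth

/-- If `F` is differentiable with `G`-Lipschitz gradient and `δ > 0`, then
`‖∇F(x) − ∇F^δ(x)‖ ≤ Gδ` for every `x`. -/
theorem stmt6 {d : ℕ} (F : EuclideanSpace ℝ (Fin d) → ℝ)
    (hF : Differentiable ℝ F) (G : ℝ) (hG : 0 ≤ G)
    (hGlip : ∀ x y, ‖gradient F x - gradient F y‖ ≤ G * ‖x - y‖)
    (δ : ℝ) (hδ : 0 < δ) :
    ∀ x, ‖gradient F x - gradient (ballSmooth F δ) x‖ ≤ G * δ := by
  intro x
  have hgrad : Continuous (gradient F) :=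
    (LipschitzWith.of_dist_le' (by simpa only [dist_eq_norm] using hGlip)).continuous
  rw [(hasGradientAt_ballSmooth hF hgrad δ x).gradient]
  refine norm_sub_integral_le_of_ae_norm_sub_le (Continuous.integrable_uniformBall (by fun_prop))
    _ ?_
  filter_upwards [ae_norm_le_one_uniformBall] with w hw
  calc ‖gradient F x - gradient F (x + δ • w)‖ ≤ G * ‖x - (x + δ • w)‖ := hGlip _ _
    _ = G * (δ * ‖w‖) := by
      rw [sub_add_cancel_left, norm_neg, norm_smul, Real.norm_of_nonneg hδ.le]
    _ ≤ G * δ := by gcongr; exact mul_le_of_le_one_right hδ.le hw
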